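/- arXiv:2002.12740 — 2 statements merged into one kernel-verified Lean document; each statement's English description precedes it below -/
import Mathlib

section
/- Change-of-variables for the divergence: if u : Ω̂ → Ω is a C² diffeomorphism and F : Ω → ℝᵈ is C¹, then det(∇u(x̂)) (∇·F)(u(x̂)) = ∇̂·(cof(∇u(x̂))ᵀ F(u(x̂))) for all x̂ ∈ Ω̂, using the Piola identity ∇̂·cof(∇u)ᵀ = 0. -/
/-!
Transposed, `∇u` has the partial derivatives `∂ₗu` as rows, so by Cramer's rule the `i`-th
component of `cof(∇u)ᵀ (F ∘ u)` is the determinant of the rows `∂₁u, …, ∂_d u` with `F ∘ u`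
in place of `∂ᵢu`. Differentiating in `x̂ᵢ` and summing over `i`, the terms in which some `∂ₖu`
(`k ≠ i`) is replaced by `∂ᵢ∂ₖu` cancel in pairs, because mixed partials commute while the
determinant alternates; this cancellation is the Piola identity. The remaining terms,
`∑ᵢ det(…, DF(u) ∂ᵢu, …)`, add up to `det ∇u · tr DF(u)` since `A · adj A = det A · 1`.
-/

open Matrix Function

theorem Finset.sum_sum_erase_eq_zero_of_antisymm {ι M : Type*} [Fintype ι] [DecidableEq ι]
    [AddCommGroup M] (T : ι → ι → M) (hT : ∀ i k, i ≠ k → T k i = -T i k) :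
    ∑ i, ∑ k ∈ univ.erase i, T i k = 0 := by
  rw [Finset.sum_sigma']
  refine Finset.sum_involution (fun p _ => ⟨p.2, p.1⟩) (fun p hp => ?_) (fun p hp _ => ?_)
    (fun p hp => ?_) (fun p _ => rfl)
  all_goals obtain ⟨i, k⟩ := p
  all_goals simp only [Finset.mem_sigma, Finset.mem_univ, Finset.mem_erase, true_and,
    and_true] at hp
  · rw [hT i k (Ne.symm hp), add_neg_cancel]
  · simp [hp]
  · simpa using Ne.symm hp

theorem Function.update_update_comp_swap {α β : Type*} [DecidableEq α] {i k : α} (hik : i ≠ k)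
    (r : α → β) (a b : β) :
    update (update r i a) k b ∘ Equiv.swap i k = update (update r k a) i b := by
  ext l
  simp only [comp_apply, update_apply, Equiv.swap_apply_def]
  split_ifs <;> simp_all

section PartialDerivatives

variable {𝕜 E V F ι : Type*} [RCLike 𝕜] [NormedAddCommGroup E] [NormedSpace 𝕜 E]
  [NormedAddCommGroup V] [NormedSpace 𝕜 V] [NormedAddCommGroup F] [NormedSpace 𝕜 F]
  [Fintype ι] [DecidableEq ι]

/-- For constant `w` and `f = det` the right-hand side vanishes: this is Piola's identity
`∇̂ · cof(∇u)ᵀ = 0`. -/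
theorem ContinuousAlternatingMap.sum_fderiv_update_fderiv_apply (f : V [⋀^ι]→L[𝕜] F)
    {u w : E → V} {x : E} (hu : ContDiffAt 𝕜 2 u x) (hw : DifferentiableAt 𝕜 w x) (e : ι → E) :
    ∑ i, fderiv 𝕜 (fun y => f (update (fun l => fderiv 𝕜 u y (e l)) i (w y))) x (e i)
      = ∑ i, f (update (fun l => fderiv 𝕜 u x (e l)) i (fderiv 𝕜 w x (e i))) := by
  set D2 := fderiv 𝕜 (fderiv 𝕜 u) x
  set r := fun l => fderiv 𝕜 u x (e l)
  have hD2 : HasFDerivAt (fderiv 𝕜 u) D2 x :=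
    ((hu.fderiv_right (m := 1) (by norm_num)).differentiableAt one_ne_zero).hasFDerivAt
  have hsymm : ∀ v v', D2 v v' = D2 v' v :=
    hu.isSymmSndFDerivAt (by simp [minSmoothness_of_isRCLikeNormedField])
  have hpartial : ∀ l, HasFDerivAt (fun y => fderiv 𝕜 u y (e l)) (D2.flip (e l)) x := fun l =>
    hD2.clm_apply (hasFDerivAt_const (e l) x) |>.congr_fderiv (by ext; simp)
  have hentry : ∀ i k, HasFDerivAt (fun y => update (fun l => fderiv 𝕜 u y (e l)) i (w y) k)
      (update (fun l => D2.flip (e l)) i (fderiv 𝕜 w x) k) x := by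
    intro i k
    rcases eq_or_ne k i with rfl | hki
    · simpa using hw.hasFDerivAt
    · simpa [update_of_ne hki] using hpartial k
  have hderiv : ∀ i, fderiv 𝕜 (fun y => f (update (fun l => fderiv 𝕜 u y (e l)) i (w y))) x (e i)
      = f (update r i (fderiv 𝕜 w x (e i)))
        + ∑ k ∈ Finset.univ.erase i, f (update (update r i (w x)) k (D2 (e i) (e k))) := by
    intro i
    have hf : HasFDerivAt (fun y => f (update (fun l => fderiv 𝕜 u y (e l)) i (w y)))
        (∑ k, (f.toContinuousLinearMap (update r i (w x)) k).comp
          (update (fun l => D2.flip (e l)) i (fderiv 𝕜 w x) k)) x :=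
      HasFDerivAt.multilinear_comp (f := f.toContinuousMultilinearMap) (hentry i)
    rw [hf.fderiv, _root_.sum_apply, ← Finset.add_sum_erase _ _ (Finset.mem_univ i)]
    congr 1
    · simp
    · refine Finset.sum_congr rfl fun k hk => ?_
      simp [update_of_ne (Finset.ne_of_mem_erase hk)]
  rw [Finset.sum_congr rfl fun i _ => hderiv i, Finset.sum_add_distrib, add_eq_left]
  refine Finset.sum_sum_erase_eq_zero_of_antisymm _ fun i k hik => ?_
  rw [hsymm, ← update_update_comp_swap hik]
  exact f.toAlternatingMap.map_swap _ hik

end PartialDerivatives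

section Determinant

variable {n R : Type*} [Fintype n] [DecidableEq n] [CommRing R]

theorem Matrix.adjugate_mulVec_apply (A : Matrix n n R) (b : n → R) (i : n) :
    (adjugate A *ᵥ b) i = det (updateRow Aᵀ i b) := by
  rw [← cramer_eq_adjugate_mulVec, cramer_apply, ← det_transpose, updateRow_transpose]

theorem Matrix.sum_det_updateRow_map_eq_det_mul_trace (A : Matrix n n R)
    (L : (n → R) →ₗ[R] (n → R)) :
    ∑ i, det (updateRow A i (L (A i))) = det A * trace (LinearMap.toMatrix' L) := by
  set M := LinearMap.toMatrix' L
  have hrow : ∀ i, A i = Aᵀ *ᵥ Pi.single i 1 := fun i => by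
    rw [mulVec_single_one]; rfl
  calc ∑ i, det (updateRow A i (L (A i)))
      = trace (adjugate Aᵀ * M * Aᵀ) := by
        simp only [trace, diag_apply]
        refine Finset.sum_congr rfl fun i _ => ?_
        rw [← transpose_transpose A, ← adjugate_mulVec_apply, transpose_transpose, hrow,
          ← LinearMap.toMatrix'_mulVec, mulVec_mulVec, mulVec_mulVec, mulVec_single_one]
        rfl
    _ = det A * trace M := by
        rw [trace_mul_cycle, mul_adjugate, det_transpose, smul_mul_assoc, one_mul, trace_smul,
          smul_eq_mul]

variable (n R) in
def Matrix.detRowContinuousAlternating [TopologicalSpace R] [IsTopologicalRing R] :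
    (n → R) [⋀^n]→L[R] R :=
  { detRowAlternating with cont := continuous_id.matrix_det }

end Determinant

theorem divergence_change_of_variables_general (d : ℕ)
    (u : (Fin d → ℝ) → (Fin d → ℝ)) (hu : ContDiff ℝ 2 u)
    (J : (Fin d → ℝ) → Matrix (Fin d) (Fin d) ℝ)
    (hJ : ∀ x, J x = Matrix.of fun i j => fderiv ℝ u x (Pi.single j 1) i)
    (cof : (Fin d → ℝ) → Matrix (Fin d) (Fin d) ℝ)
    (hcof : ∀ x, cof x = ((J x).adjugate)ᵀ)
    (F : (Fin d → ℝ) → (Fin d → ℝ)) (hF : ContDiff ℝ 1 F) :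
    ∀ xh : Fin d → ℝ,
      (J xh).det * (∑ i, fderiv ℝ F (u xh) (Pi.single i 1) i)
        = ∑ i, fderiv ℝ (fun yh => ((cof yh)ᵀ).mulVec (F (u yh)) i) xh (Pi.single i 1) := by
  intro xh
  have hJt : ∀ x, (J x)ᵀ = fun l => fderiv ℝ u x (Pi.single l 1) := fun x => by
    rw [hJ]; rfl
  have hcomp : HasFDerivAt (F ∘ u) ((fderiv ℝ F (u xh)).comp (fderiv ℝ u xh)) xh :=
    (hF.differentiable one_ne_zero _).hasFDerivAt.comp xh
      (hu.differentiable (by norm_num) _).hasFDerivAt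
  have hcramer : ∀ i, (fun yh => ((cof yh)ᵀ *ᵥ F (u yh)) i) = fun yh =>
      detRowContinuousAlternating (Fin d) ℝ
        (update (fun l => fderiv ℝ u yh (Pi.single l 1)) i ((F ∘ u) yh)) := fun i => by
    ext yh
    rw [hcof, transpose_transpose, adjugate_mulVec_apply, hJt]
    rfl
  simp_rw [hcramer]
  rw [ContinuousAlternatingMap.sum_fderiv_update_fderiv_apply _ hu.contDiffAt
    hcomp.differentiableAt, hcomp.fderiv, ← det_transpose, hJt]
  exact (sum_det_updateRow_map_eq_det_mul_trace _ (fderiv ℝ F (u xh)).toLinearMap).symm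

/-- Change of variables for the divergence: if `u` is a `C²` diffeomorphism with
Jacobian `∇u` and `F` is `C¹`, then
`det(∇u xh) (∇·F)(u xh) = ∇̂·( cof(∇u xh)ᵀ F(u xh) )` for all `xh`,
where `cof A = (adjugate A)ᵀ` is the cofactor matrix. -/
theorem divergence_change_of_variables (d : ℕ)
    (u : (Fin d → ℝ) → (Fin d → ℝ)) (hu : ContDiff ℝ 2 u)
    (hbij : Function.Bijective u)
    (J : (Fin d → ℝ) → Matrix (Fin d) (Fin d) ℝ)
    (hJ : ∀ x, J x = Matrix.of fun i j => fderiv ℝ u x (Pi.single j 1) i)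
    (hJinv : ∀ x, IsUnit (J x).det)
    (cof : (Fin d → ℝ) → Matrix (Fin d) (Fin d) ℝ)
    (hcof : ∀ x, cof x = ((J x).adjugate)ᵀ)
    (F : (Fin d → ℝ) → (Fin d → ℝ)) (hF : ContDiff ℝ 1 F) :
    ∀ xh : Fin d → ℝ,
      (J xh).det * (∑ i, fderiv ℝ F (u xh) (Pi.single i 1) i)
        = ∑ i, fderiv ℝ (fun yh => ((cof yh)ᵀ).mulVec (F (u yh)) i) xh (Pi.single i 1) :=
  divergence_change_of_variables_general d u hu J hJ cof hcof F hF
end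

section
/- Piola identity: for any C² map u : Ω̂ ⊂ ℝᵈ → ℝᵈ, each row of the cofactor matrix of the Jacobian is divergence-free: ∇̂ · cof(∇u) = 0 (componentwise), where cof(A) = det(A) A^{-T} when A is invertible, extended polynomially in the entries of A. -/
/-!
By the Leibniz formula, `cof(∇u)ᵢⱼ = ∑_{σ i = j} sgn σ ∏_{k ≠ i} ∂_{σ k} u_k`. Differentiating in
`x_{σ i}` and summing over `j` gives, for each `l ≠ i`, the terms
`sgn σ (∏_{k ≠ i, l} ∂_{σ k} u_k) ∂_{σ i} ∂_{σ l} u_l`. Replacing `σ` by `σ ∘ (i l)` flips the sign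
but, by the symmetry of second derivatives, fixes the rest, so these terms cancel in pairs.
-/

open Matrix Finset Equiv

section Algebra

variable {R : Type*} [CommRing R] {n : Type*} [Fintype n] [DecidableEq n]

theorem Matrix.adjugate_transpose_apply_eq_sum_perm (A : Matrix n n R) (i j : n) :
    A.adjugateᵀ i j = ∑ σ : Perm n,
      if σ i = j then (Perm.sign σ : ℤ) * ∏ k ∈ univ.erase i, A k (σ k) else 0 := by
  rw [transpose_apply, adjugate_apply, ← det_transpose, det_apply']
  refine sum_congr rfl fun σ _ => ?_
  rw [← mul_prod_erase _ _ (mem_univ i)]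
  simp only [transpose_apply, updateRow_self, Pi.single_apply]
  have hrest : ∏ k ∈ univ.erase i, A.updateRow i (Pi.single j 1) k (σ k)
      = ∏ k ∈ univ.erase i, A k (σ k) :=
    prod_congr rfl fun k hk => by rw [updateRow_ne (mem_erase.1 hk).1]
  split_ifs <;> simp [hrest]

theorem sum_perm_sign_mul_prod_erase_mul_eq_zero (A : Matrix n n R) (B : n → n → R)
    (hB : ∀ a b, B a b = B b a) {i l : n} (hil : i ≠ l) :
    ∑ σ : Perm n, (Perm.sign σ : ℤ) *
      ((∏ k ∈ (univ.erase i).erase l, A k (σ k)) * B (σ l) (σ i)) = (0 : R) := by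
  refine sum_involution (fun σ _ => σ * swap i l) (fun σ _ => ?_) (fun σ _ _ => ?_)
    (fun _ _ => mem_univ _) (fun σ _ => by simp [mul_assoc])
  · have hprod : ∏ k ∈ (univ.erase i).erase l, A k ((σ * swap i l) k)
        = ∏ k ∈ (univ.erase i).erase l, A k (σ k) := by
      refine prod_congr rfl fun k hk => ?_
      obtain ⟨hkl, hk⟩ := mem_erase.1 hk
      rw [Perm.mul_apply, swap_apply_of_ne_of_ne (mem_erase.1 hk).1 hkl]
    rw [hprod]
    simp only [Perm.sign_mul, Perm.sign_swap hil, Perm.mul_apply, swap_apply_left,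
      swap_apply_right, hB (σ i)]
    push_cast
    ring
  · rw [Ne, mul_eq_left]
    exact fun h => hil (swap_eq_refl_iff.1 h)

end Algebra

section Calculus

variable {𝕜 : Type*} [NontriviallyNormedField 𝕜] {E : Type*} [NormedAddCommGroup E]
  [NormedSpace 𝕜 E] {n : Type*} [Fintype n]

theorem hasFDerivAt_fderiv_apply_apply {u : E → (n → 𝕜)} {x : E}
    (hu : DifferentiableAt 𝕜 (fderiv 𝕜 u) x) (v : E) (k : n) :
    HasFDerivAt (fun y => fderiv 𝕜 u y v k)
      ((ContinuousLinearMap.proj k).comp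
        ((ContinuousLinearMap.apply 𝕜 _ v).comp (fderiv 𝕜 (fderiv 𝕜 u) x))) x :=
  (ContinuousLinearMap.proj (R := 𝕜) (φ := fun _ : n => 𝕜) k).hasFDerivAt.comp x
    ((ContinuousLinearMap.apply 𝕜 (n → 𝕜) v).hasFDerivAt.comp x hu.hasFDerivAt)

variable [DecidableEq n]

theorem hasFDerivAt_adjugate_transpose_apply {M : E → Matrix n n 𝕜} {M' : n → n → E →L[𝕜] 𝕜}
    {x : E} (hM : ∀ k m, HasFDerivAt (fun y => M y k m) (M' k m) x) (i j : n) :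
    HasFDerivAt (fun y => (M y).adjugateᵀ i j)
      (∑ σ : Perm n, if σ i = j then ((Perm.sign σ : ℤ) : 𝕜) •
        ∑ l ∈ univ.erase i, (∏ k ∈ (univ.erase i).erase l, M x k (σ k)) • M' l (σ l)
        else 0) x := by
  simp_rw [adjugate_transpose_apply_eq_sum_perm]
  refine HasFDerivAt.fun_sum fun σ _ => ?_
  split_ifs
  · exact (HasFDerivAt.finsetProd fun l _ => hM l (σ l)).const_mul _
  · exact hasFDerivAt_const 0 x

theorem sum_fderiv_adjugate_transpose_apply_eq_zero {M : (n → 𝕜) → Matrix n n 𝕜}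
    {M' : n → n → (n → 𝕜) →L[𝕜] 𝕜} {x : n → 𝕜}
    (hM : ∀ k m, HasFDerivAt (fun y => M y k m) (M' k m) x)
    (hsymm : ∀ l a b, M' l a (Pi.single b 1) = M' l b (Pi.single a 1)) (i : n) :
    ∑ j, fderiv 𝕜 (fun y => (M y).adjugateᵀ i j) x (Pi.single j 1) = 0 := by
  simp_rw [(hasFDerivAt_adjugate_transpose_apply hM i _).fderiv]
  calc _ = ∑ σ : Perm n, ((Perm.sign σ : ℤ) : 𝕜) * ∑ l ∈ univ.erase i,
          (∏ k ∈ (univ.erase i).erase l, M x k (σ k)) * M' l (σ l) (Pi.single (σ i) 1) := by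
        simp only [_root_.sum_apply]
        rw [sum_comm]
        refine sum_congr rfl fun σ _ => ?_
        rw [sum_eq_single_of_mem (σ i) (mem_univ _)
          fun j _ hj => by rw [if_neg (Ne.symm hj), _root_.zero_apply], if_pos rfl]
        simp only [_root_.smul_apply, _root_.sum_apply, smul_eq_mul]
    _ = ∑ l ∈ univ.erase i, ∑ σ : Perm n, ((Perm.sign σ : ℤ) : 𝕜) *
          ((∏ k ∈ (univ.erase i).erase l, M x k (σ k)) * M' l (σ l) (Pi.single (σ i) 1)) := by
        simp_rw [mul_sum]
        rw [sum_comm]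
    _ = 0 := sum_eq_zero fun l hl => sum_perm_sign_mul_prod_erase_mul_eq_zero (M x)
        (fun a b => M' l a (Pi.single b 1)) (hsymm l) (mem_erase.1 hl).1.symm

end Calculus

/-- Piola identity: for a `C²` map `u : ℝᵈ → ℝᵈ`, each row of the cofactor
matrix `cof(∇u) = (adjugate ∇u)ᵀ` of the Jacobian is divergence-free:
`∑ⱼ ∂ⱼ (cof ∇u)ᵢⱼ = 0` for each `i`. -/
theorem piola_identity (d : ℕ)
    (u : (Fin d → ℝ) → (Fin d → ℝ)) (hu : ContDiff ℝ 2 u)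
    (J : (Fin d → ℝ) → Matrix (Fin d) (Fin d) ℝ)
    (hJ : ∀ x, J x = Matrix.of fun i j => fderiv ℝ u x (Pi.single j 1) i)
    (cof : (Fin d → ℝ) → Matrix (Fin d) (Fin d) ℝ)
    (hcof : ∀ x, cof x = ((J x).adjugate)ᵀ) :
    ∀ (x : Fin d → ℝ) (i : Fin d),
      ∑ j, fderiv ℝ (fun y => cof y i j) x (Pi.single j 1) = 0 := by
  intro x i
  obtain rfl : J = _ := funext hJ
  obtain rfl : cof = _ := funext hcof
  have hD2 : DifferentiableAt ℝ (fderiv ℝ u) x :=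
    ((hu.fderiv_right le_rfl).differentiable one_ne_zero).differentiableAt
  have hsymm : IsSymmSndFDerivAt ℝ u x :=
    hu.contDiffAt.isSymmSndFDerivAt (by simp [minSmoothness_of_isRCLikeNormedField])
  exact sum_fderiv_adjugate_transpose_apply_eq_zero
    (fun k m => hasFDerivAt_fderiv_apply_apply hD2 (Pi.single m 1) k)
    (fun l a b => congrFun (hsymm _ _) l) i
end
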